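/- Let d, M be positive integers, x_1, …, x_M ∈ ℝ^d, r_1, …, r_M ∈ ℝ, ζ > 0, ε > 0. Define u*(w)_i = 1 if (r_i − ⟨x_i, w⟩)² < ε, else 0. Let w⁽⁰⁾ ∈ ℝ^d and for t ≥ 0 set u⁽ᵗ⁾ = u*(w⁽ᵗ⁾) and w⁽ᵗ⁺¹⁾ = (Σ_{i=1}^M u_i⁽ᵗ⁾ x_i x_iᵀ + ζ I)⁻¹ (Σ_{i=1}^M u_i⁽ᵗ⁾ r_i x_i). Then the iteration converges after a finite number of iterations: there exists T ∈ ℕ such that for all t ≥ T, w⁽ᵗ⁾ = w⁽ᵀ⁾ and u⁽ᵗ⁾ = u⁽ᵀ⁾. -/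

import Mathlib

/-!
The iteration is alternating minimisation of
`J(a, v) = ∑ᵢ (aᵢ (rᵢ - ⟪xᵢ, v⟫)² + ε (1 - aᵢ)) + ζ ‖v‖²`: the `w`-step is the unique minimiser
of the strictly convex ridge problem `J(u, ·)`, and the `u`-step minimises `J(·, w)` over
`[0, 1]ᴹ`, the minimum being the trimmed loss `∑ᵢ min ((rᵢ - ⟪xᵢ, w⟫)², ε) + ζ ‖w‖²`. So the
trimmed loss strictly decreases at every step that moves `w`. As `w⁽ᵗ⁺¹⁾` depends only on the
`0/1`-vector `u⁽ᵗ⁾`, the iterates take finitely many values, and a repeated value forces a fixed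
point.
-/

open scoped RealInnerProductSpace
open Finset Matrix

theorem min_le_mul_add_mul_one_sub {q ε a : ℝ} (ha₀ : 0 ≤ a) (ha₁ : a ≤ 1) :
    min q ε ≤ a * q + ε * (1 - a) := by
  nlinarith [min_le_left q ε, min_le_right q ε]

theorem ite_mul_add_mul_one_sub (q ε : ℝ) :
    (if q < ε then 1 else 0) * q + ε * (1 - if q < ε then 1 else 0) = min q ε := by
  split_ifs with h
  · simp [min_eq_left h.le]
  · simp [min_eq_right (not_lt.mp h)]

section Trimmed

variable {ι E : Type*} [NormedAddCommGroup E] [InnerProductSpace ℝ E]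
  (x : ι → E) (r : ι → ℝ) (ζ ε : ℝ)

noncomputable def trimmedWeights (v : E) : ι → ℝ :=
  fun i => if (r i - ⟪x i, v⟫) ^ 2 < ε then 1 else 0

theorem trimmedWeights_nonneg (v : E) (i : ι) : 0 ≤ trimmedWeights x r ε v i := by
  unfold trimmedWeights; split_ifs <;> norm_num

theorem trimmedWeights_le_one (v : E) (i : ι) : trimmedWeights x r ε v i ≤ 1 := by
  unfold trimmedWeights; split_ifs <;> norm_num

theorem finite_range_trimmedWeights [Finite ι] : (Set.range (trimmedWeights x r ε)).Finite :=
  (Set.Finite.pi fun _ => Set.toFinite ({0, 1} : Set ℝ)).subset <| by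
    rintro _ ⟨v, rfl⟩ i -
    unfold trimmedWeights; split_ifs <;> simp

variable [Fintype ι]

def ridgeLoss (a : ι → ℝ) (v : E) : ℝ :=
  ∑ i, a i * (r i - ⟪x i, v⟫) ^ 2 + ζ * ‖v‖ ^ 2

/-- Coordinate-free form of `(∑ i, a i • xᵢ xᵢᵀ + ζ • 1) w = ∑ i, a i • r i • xᵢ`. -/
def RidgeNormalEquations (a : ι → ℝ) (w : E) : Prop :=
  ∑ i, (a i * ⟪x i, w⟫) • x i + ζ • w = ∑ i, (a i * r i) • x i

def trimmedLoss (v : E) : ℝ :=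
  ∑ i, min ((r i - ⟪x i, v⟫) ^ 2) ε + ζ * ‖v‖ ^ 2

variable {x r ζ ε}

theorem ridgeLoss_eq_of_normalEquations {a : ι → ℝ} {w : E}
    (hw : RidgeNormalEquations x r ζ a w) (v : E) :
    ridgeLoss x r ζ a v =
      ridgeLoss x r ζ a w + (∑ i, a i * ⟪x i, v - w⟫ ^ 2 + ζ * ‖v - w‖ ^ 2) := by
  obtain ⟨z, rfl⟩ : ∃ z, v = w + z := ⟨v - w, by abel⟩
  rw [add_sub_cancel_left]
  have hcross : ∑ i, a i * ⟪x i, w⟫ * ⟪x i, z⟫ + ζ * ⟪w, z⟫ = ∑ i, a i * r i * ⟪x i, z⟫ := by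
    simpa only [inner_add_left, sum_inner, real_inner_smul_left] using congrArg (⟪·, z⟫) hw
  have hsum : ∑ i, a i * (r i - ⟪x i, w + z⟫) ^ 2 =
      ∑ i, a i * (r i - ⟪x i, w⟫) ^ 2 + ∑ i, a i * ⟪x i, z⟫ ^ 2
        - 2 * ∑ i, a i * r i * ⟪x i, z⟫ + 2 * ∑ i, a i * ⟪x i, w⟫ * ⟪x i, z⟫ := by
    simp only [mul_sum, ← sum_add_distrib, ← sum_sub_distrib, inner_add_right]
    exact sum_congr rfl fun i _ => by ring
  simp only [ridgeLoss, hsum, norm_add_sq_real]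
  linarith

theorem ridgeLoss_add_le_of_normalEquations {a : ι → ℝ} {w : E} (ha : ∀ i, 0 ≤ a i)
    (hw : RidgeNormalEquations x r ζ a w) (v : E) :
    ridgeLoss x r ζ a w + ζ * ‖v - w‖ ^ 2 ≤ ridgeLoss x r ζ a v := by
  rw [ridgeLoss_eq_of_normalEquations hw v]
  have : 0 ≤ ∑ i, a i * ⟪x i, v - w⟫ ^ 2 := sum_nonneg fun i _ => mul_nonneg (ha i) (sq_nonneg _)
  linarith

theorem ridgeLoss_add_sum_one_sub (a : ι → ℝ) (v : E) :
    ridgeLoss x r ζ a v + ε * ∑ i, (1 - a i) =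
      ∑ i, (a i * (r i - ⟪x i, v⟫) ^ 2 + ε * (1 - a i)) + ζ * ‖v‖ ^ 2 := by
  rw [ridgeLoss, mul_sum, sum_add_distrib]
  ring

theorem trimmedLoss_le {a : ι → ℝ} (ha₀ : ∀ i, 0 ≤ a i) (ha₁ : ∀ i, a i ≤ 1) (v : E) :
    trimmedLoss x r ζ ε v ≤ ridgeLoss x r ζ a v + ε * ∑ i, (1 - a i) := by
  rw [ridgeLoss_add_sum_one_sub, trimmedLoss]
  gcongr with i
  exact min_le_mul_add_mul_one_sub (ha₀ i) (ha₁ i)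

theorem trimmedLoss_eq (v : E) :
    trimmedLoss x r ζ ε v =
      ridgeLoss x r ζ (trimmedWeights x r ε v) v + ε * ∑ i, (1 - trimmedWeights x r ε v i) := by
  rw [ridgeLoss_add_sum_one_sub, trimmedLoss]
  simp only [trimmedWeights, ite_mul_add_mul_one_sub]

theorem trimmedLoss_add_le {v w : E}
    (hw : RidgeNormalEquations x r ζ (trimmedWeights x r ε v) w) :
    trimmedLoss x r ζ ε w + ζ * ‖v - w‖ ^ 2 ≤ trimmedLoss x r ζ ε v := by
  have hridge := ridgeLoss_add_le_of_normalEquations (trimmedWeights_nonneg x r ε v) hw v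
  have htrim : trimmedLoss x r ζ ε w ≤ _ :=
    trimmedLoss_le (trimmedWeights_nonneg x r ε v) (trimmedWeights_le_one x r ε v) w
  rw [trimmedLoss_eq v]
  linarith

end Trimmed

theorem exists_forall_ge_eq_of_lyapunov {α : Type*} {F : α → α} {L : α → ℝ}
    (hF : (Set.range F).Finite) (hL : ∀ v, F v = v ∨ L (F v) < L v)
    {w : ℕ → α} (hw : ∀ t, w (t + 1) = F (w t)) :
    ∃ T, ∀ t, T ≤ t → w t = w T := by
  have hanti : Antitone (L ∘ w) := antitone_nat_of_succ_le fun t => by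
    rw [Function.comp_apply, Function.comp_apply, hw t]
    rcases hL (w t) with h | h
    · rw [h]
    · exact h.le
  obtain ⟨m, n, hmn, hmn_eq⟩ := Set.Finite.exists_lt_map_eq_of_forall_mem
    (f := fun t : ℕ => w (t + 1)) (t := Set.range F) (fun t => ⟨w t, (hw t).symm⟩) hF
  have hfix : F (w (m + 1)) = w (m + 1) := by
    refine (hL (w (m + 1))).resolve_right fun hlt => ?_
    have hle : L (w (n + 1)) ≤ L (w (m + 1 + 1)) := hanti (show m + 1 + 1 ≤ n + 1 by omega)
    rw [← hw, hmn_eq] at hlt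
    exact hle.not_gt hlt
  refine ⟨m + 1, fun t ht => ?_⟩
  induction t, ht using Nat.le_induction with
  | base => rfl
  | succ t _ ih => rw [hw, ih, hfix]

section Matrix

variable {ι n : Type*} [Fintype ι] [Fintype n] [DecidableEq n]
  (x : ι → EuclideanSpace ℝ n) (r : ι → ℝ) (ζ : ℝ)

def ridgeMatrix (a : ι → ℝ) : Matrix n n ℝ :=
  ∑ i, a i • vecMulVec (x i) (x i) + ζ • 1

noncomputable def ridgeSolution (a : ι → ℝ) : EuclideanSpace ℝ n :=
  WithLp.toLp 2 ((ridgeMatrix x ζ a)⁻¹ *ᵥ ∑ i, a i • r i • WithLp.ofLp (x i))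

variable {x r ζ}

theorem ridgeMatrix_mulVec (a : ι → ℝ) (v : EuclideanSpace ℝ n) :
    ridgeMatrix x ζ a *ᵥ v = WithLp.ofLp (∑ i, (a i * ⟪x i, v⟫) • x i + ζ • v) := by
  simp [ridgeMatrix, add_mulVec, sum_mulVec, smul_mulVec, vecMulVec_mulVec, mul_smul,
    EuclideanSpace.inner_eq_star_dotProduct, dotProduct_comm]

theorem ridgeMatrix_posDef {a : ι → ℝ} (ha : ∀ i, 0 ≤ a i) (hζ : 0 < ζ) :
    (ridgeMatrix x ζ a).PosDef :=
  PosDef.posSemidef_add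
    (posSemidef_sum univ fun i _ => (posSemidef_vecMulVec_self_star (x i)).smul (ha i))
    (PosDef.one.smul hζ)

theorem ridgeNormalEquations_ridgeSolution {a : ι → ℝ} (ha : ∀ i, 0 ≤ a i) (hζ : 0 < ζ) :
    RidgeNormalEquations x r ζ a (ridgeSolution x r ζ a) := by
  have hunit := (isUnit_iff_isUnit_det _).mp (ridgeMatrix_posDef (x := x) ha hζ).isUnit
  apply WithLp.ofLp_injective 2
  rw [← ridgeMatrix_mulVec, ridgeSolution, mulVec_mulVec, mul_nonsing_inv _ hunit, one_mulVec]
  simp [mul_smul]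

theorem ridgeSolution_trimmedWeights_eq_or_trimmedLoss_lt {ε : ℝ} (hζ : 0 < ζ)
    (v : EuclideanSpace ℝ n) :
    ridgeSolution x r ζ (trimmedWeights x r ε v) = v ∨
      trimmedLoss x r ζ ε (ridgeSolution x r ζ (trimmedWeights x r ε v)) <
        trimmedLoss x r ζ ε v := by
  refine or_iff_not_imp_left.mpr fun hne => ?_
  have hdescent := trimmedLoss_add_le
    (ridgeNormalEquations_ridgeSolution (r := r) (trimmedWeights_nonneg x r ε v) hζ)
  have hpos : 0 < ζ * ‖v - ridgeSolution x r ζ (trimmedWeights x r ε v)‖ ^ 2 :=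
    mul_pos hζ (pow_pos (norm_pos_iff.mpr (sub_ne_zero.mpr (Ne.symm hne))) 2)
  linarith

end Matrix

theorem stmt_11_general (d M : ℕ)
    (x : Fin M → EuclideanSpace ℝ (Fin d)) (r : Fin M → ℝ)
    (ζ ε : ℝ) (hζ : 0 < ζ)
    (w : ℕ → EuclideanSpace ℝ (Fin d)) (u : ℕ → Fin M → ℝ)
    (hu : ∀ t i, u t i = if (r i - ⟪x i, w t⟫) ^ 2 < ε then 1 else 0)
    (hw : ∀ t, w (t + 1) =
      ((∑ i, u t i • Matrix.vecMulVec (x i) (x i)) +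
        ζ • (1 : Matrix (Fin d) (Fin d) ℝ))⁻¹.mulVec (∑ i, u t i • r i • x i)) :
    ∃ T : ℕ, ∀ t : ℕ, T ≤ t → w t = w T ∧ u t = u T := by
  have hu' : ∀ t, u t = trimmedWeights x r ε (w t) := fun t => funext (hu t)
  have hstep : ∀ t, w (t + 1) = (ridgeSolution x r ζ ∘ trimmedWeights x r ε) (w t) := fun t =>
    WithLp.ofLp_injective 2 (by rw [hw, hu']; rfl)
  have hfinite : (Set.range (ridgeSolution x r ζ ∘ trimmedWeights x r ε)).Finite := by
    rw [Set.range_comp]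
    exact (finite_range_trimmedWeights x r ε).image _
  obtain ⟨T, hT⟩ := exists_forall_ge_eq_of_lyapunov hfinite
    (ridgeSolution_trimmedWeights_eq_or_trimmedLoss_lt hζ) hstep
  exact ⟨T, fun t ht => ⟨hT t ht, by rw [hu', hu', hT t ht]⟩⟩

/-- Theorem 1 of the paper: the reweighted iteration converges
after a finite number of iterations. -/
theorem stmt_11 (d M : ℕ) (hd : 0 < d) (hM : 0 < M)
    (x : Fin M → EuclideanSpace ℝ (Fin d)) (r : Fin M → ℝ)
    (ζ ε : ℝ) (hζ : 0 < ζ) (hε : 0 < ε)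
    (w : ℕ → EuclideanSpace ℝ (Fin d)) (u : ℕ → Fin M → ℝ)
    (hu : ∀ t i, u t i = if (r i - ⟪x i, w t⟫) ^ 2 < ε then 1 else 0)
    (hw : ∀ t, w (t + 1) =
      ((∑ i, u t i • Matrix.vecMulVec (x i) (x i)) +
        ζ • (1 : Matrix (Fin d) (Fin d) ℝ))⁻¹.mulVec (∑ i, u t i • r i • x i)) :
    ∃ T : ℕ, ∀ t : ℕ, T ≤ t → w t = w T ∧ u t = u T :=
  stmt_11_general d M x r ζ ε hζ w u hu hw
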